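/- The hyperplane foliation F = {xₙ = s}_{s∈ℝ} of (ℝⁿ, g = h²δ) with h = ∏_{i=1}^{n-1}(2+cos(π xᵢ)) is totally geodesic but no leaf is isoparametric: for each s there exist two unit-speed geodesics γ_a, γ_b normal to F_s such that the mean curvature H^r of the parallel hypersurface at distance r satisfies (d/dr)|_{r=0} H^r > 0 along γ_a and (d/dr)|_{r=0} H^r < 0 along γ_b; hence for small r > 0 the parallel hypersurface of F_s at distance r does not have constant mean curvature. -/

import Mathlib

open Real Finset

/-- Partial derivative of `f` in the `i`-th coordinate direction. -/
noncomputable def pd {n : ℕ} (i : Fin n) (f : (Fin n → ℝ) → ℝ) (x : Fin n → ℝ) : ℝ :=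
  fderiv ℝ f x (Pi.single i 1)

/-- The conformal factor `h(x) = ∏_{i=1}^{n-1} (2 + cos (π xᵢ))`. -/
noncomputable def hC (n : ℕ) (x : Fin n → ℝ) : ℝ :=
  ∏ i : Fin (n - 1), (2 + Real.cos (Real.pi * x (Fin.castLE (Nat.sub_le n 1) i)))

/-- The conformally flat metric `g_{ij} = h² δ_{ij}`. -/
noncomputable def gM {n : ℕ} (h : (Fin n → ℝ) → ℝ) (x : Fin n → ℝ) (i j : Fin n) : ℝ :=
  if i = j then (h x) ^ 2 else 0

/-- Christoffel symbols `Γᵏ_{ij} = ½ Σₗ g^{kl} (∂ᵢ g_{jl} + ∂ⱼ g_{li} − ∂ₗ g_{ij})`,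
with inverse metric `g^{kl} = h⁻² δ_{kl}`. -/
noncomputable def Γconf {n : ℕ} (h : (Fin n → ℝ) → ℝ) (k i j : Fin n) (x : Fin n → ℝ) : ℝ :=
  (1 / 2) * ∑ l, (if k = l then ((h x) ^ 2)⁻¹ else 0) *
    (pd i (fun y => gM h y j l) x + pd j (fun y => gM h y l i) x - pd l (fun y => gM h y i j) x)

/-- Components of the curvature tensor: `R(∂ᵢ,∂ⱼ)∂ₖ = (Rcurv h l k i j) ∂ₗ`. -/
noncomputable def Rcurv {n : ℕ} (h : (Fin n → ℝ) → ℝ) (l k i j : Fin n) (x : Fin n → ℝ) : ℝ :=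
  pd i (fun y => Γconf h l j k y) x - pd j (fun y => Γconf h l i k y) x
    + ∑ m, Γconf h m j k x * Γconf h l i m x - ∑ m, Γconf h m i k x * Γconf h l j m x

/-- Jacobi operator components `(R̄_{∂_N})_{ij} = ⟨R̄(∂ᵢ,∂_N)∂_N, ∂ⱼ⟩`. -/
noncomputable def Jac {n : ℕ} (h : (Fin n → ℝ) → ℝ) (N i j : Fin n) (x : Fin n → ℝ) : ℝ :=
  ∑ l, gM h x l j * Rcurv h l N i N x

/-!
For a conformally flat metric `h² δ` the Christoffel symbols are
`Γᵏᵢⱼ = h⁻¹ (δⱼₖ ∂ᵢh + δᵢₖ ∂ⱼh − δᵢⱼ ∂ₖh)`. Since `h` does not depend on `x_N`, the leaves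
`x_N = s` are totally geodesic; at a critical point of `h` all `Γᵏᵢⱼ` vanish, so lines in the
`x_N` direction through critical points are geodesics, and `Ric(∂_N, ∂_N) = −h⁻¹ Σ_{i≠N} ∂ᵢ²h`.
On the lines where all tangential coordinates equal an integer `v` this is
`(n − 1) π² cos (π v) / (2 + cos (π v))`, which is `(n − 1) π² / 3` for `v = 0` and
`(1 − n) π²` for `v = 1`. Two functions vanishing at `0` with different right derivatives
there differ on some interval `(0, δ)`.
-/

open Function

local notation "ι" => Fin.castLE (Nat.sub_le _ 1)

section PartialDerivative

variable {n : ℕ} {f g : (Fin n → ℝ) → ℝ} {x : Fin n → ℝ}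

lemma pd_eq_deriv_update (hf : DifferentiableAt ℝ f x) (i : Fin n) :
    pd i f x = deriv (fun t => f (update x i t)) (x i) := by
  have hf' : HasFDerivAt f (fderiv ℝ f x) (update x i (x i)) := by
    rw [update_eq_self]; exact hf.hasFDerivAt
  exact ((hf'.comp_hasDerivAt (x i) (hasDerivAt_update x i (x i))).deriv).symm

lemma pd_mul (hf : DifferentiableAt ℝ f x) (hg : DifferentiableAt ℝ g x) (i : Fin n) :
    pd i (fun y => f y * g y) x = pd i f x * g x + f x * pd i g x := by
  simp [pd, fderiv_fun_mul hf hg]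
  ring

lemma differentiable_pd (hf : ContDiff ℝ 2 f) (i : Fin n) : Differentiable ℝ (pd i f) :=
  ((hf.fderiv_right (m := 1) (by norm_num)).clm_apply contDiff_const).differentiable
    (by norm_num)

end PartialDerivative

section ConformalMetric

variable {n : ℕ} {h : (Fin n → ℝ) → ℝ} {x : Fin n → ℝ}

lemma pd_gM (hx : DifferentiableAt ℝ h x) (i a b : Fin n) :
    pd i (fun y => gM h y a b) x = if a = b then 2 * h x * pd i h x else 0 := by
  by_cases hab : a = b
  · simp only [gM, hab, if_true, pd, fderiv_fun_pow 2 hx]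
    simp [mul_assoc]
  · simp [gM, hab, pd]

lemma Γconf_eq (hx : DifferentiableAt ℝ h x) (h0 : h x ≠ 0) (k i j : Fin n) :
    Γconf h k i j x = (h x)⁻¹ * ((if j = k then pd i h x else 0)
      + (if i = k then pd j h x else 0) - (if i = j then pd k h x else 0)) := by
  rw [Γconf, Finset.sum_eq_single k (fun l _ hl => by simp [Ne.symm hl]) (by simp)]
  simp only [if_true, pd_gM hx, eq_comm (a := k) (b := i)]
  split_ifs <;> field_simp <;> ring

lemma Γconf_eq_zero_of_pd_eq_zero (hx : DifferentiableAt ℝ h x) (hcrit : ∀ k, pd k h x = 0)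
    (k i j : Fin n) : Γconf h k i j x = 0 := by
  simp [Γconf, pd_gM hx, hcrit]

lemma Γconf_tangent_normal {N i j : Fin n} (hx : DifferentiableAt ℝ h x) (h0 : h x ≠ 0)
    (hN : pd N h x = 0) (hi : i ≠ N) (hj : j ≠ N) : Γconf h j i N x = 0 := by
  rw [Γconf_eq hx h0, if_neg (Ne.symm hj), if_neg hi, hN]
  simp

lemma Jac_diag (N i : Fin n) (x : Fin n → ℝ) :
    Jac h N i i x = h x ^ 2 * Rcurv h i N i N x := by
  rw [Jac, Finset.sum_eq_single i (fun l _ hl => by simp [gM, hl]) (by simp)]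
  simp [gM]

variable (hh : ContDiff ℝ 2 h) (h0 : ∀ y, h y ≠ 0) {N : Fin n} (hN : ∀ y, pd N h y = 0)
  (hcrit : ∀ k, pd k h x = 0)
include hh h0 hN hcrit

lemma Rcurv_normal_of_pd_eq_zero {i : Fin n} (hi : i ≠ N) :
    Rcurv h i N i N x = -((h x)⁻¹ * pd i (pd i h) x) := by
  have hd : Differentiable ℝ h := hh.differentiable (by norm_num)
  have hΓNN : (fun y => Γconf h i N N y) = fun y => -(h y)⁻¹ * pd i h y := by
    funext y; rw [Γconf_eq (hd y) (h0 y), if_neg (Ne.symm hi), if_pos rfl]; ring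
  have hΓiN : (fun y => Γconf h i i N y) = fun _ => 0 := by
    funext y; rw [Γconf_eq (hd y) (h0 y), if_neg (Ne.symm hi), if_neg hi, hN]; simp
  have hinv : DifferentiableAt ℝ (fun y => -(h y)⁻¹) x := ((hd x).inv (h0 x)).neg
  rw [Rcurv, hΓNN, hΓiN, pd_mul hinv (differentiable_pd hh i x), hcrit]
  simp [pd, Γconf_eq_zero_of_pd_eq_zero (hd x) hcrit]

-- The left side is `Ric(∂_N, ∂_N)`: `h⁻² Jac h N i i = Rⁱ_{NiN}` and `Rᴺ_{NNN} = 0`.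
lemma ricci_normal_of_pd_eq_zero :
    ∑ i ∈ Finset.univ.erase N, ((h x) ^ 2)⁻¹ * Jac h N i i x
      = -((h x)⁻¹ * ∑ i ∈ Finset.univ.erase N, pd i (pd i h) x) := by
  rw [Finset.mul_sum, ← Finset.sum_neg_distrib]
  refine Finset.sum_congr rfl fun i hi => ?_
  rw [Jac_diag, Rcurv_normal_of_pd_eq_zero hh h0 hN hcrit (Finset.ne_of_mem_erase hi),
    ← mul_assoc, inv_mul_cancel₀ (pow_ne_zero 2 (h0 x)), one_mul]

end ConformalMetric

section ConformalFactor

variable {n : ℕ}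

lemma hC_pos (x : Fin n → ℝ) : 0 < hC n x :=
  Finset.prod_pos fun j _ => by linarith [neg_one_le_cos (π * x (ι j))]

lemma contDiff_hC : ContDiff ℝ 2 (hC n) := by
  unfold hC; fun_prop

lemma update_castLE_of_ne {α : Type*} (x : Fin n → α) {j k : Fin (n - 1)} (hkj : k ≠ j)
    (t : α) :
    update x (ι j) t (ι k) = x (ι k) :=
  update_of_ne ((Fin.castLE_injective _).ne hkj) t x

lemma hC_update_castLE (x : Fin n → ℝ) (j : Fin (n - 1)) (t : ℝ) :
    hC n (update x (ι j) t) = (2 + cos (π * t)) *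
      ∏ k ∈ Finset.univ.erase j, (2 + cos (π * x (ι k))) := by
  rw [hC, ← Finset.mul_prod_erase _ _ (Finset.mem_univ j), update_self]
  congr 1
  exact Finset.prod_congr rfl fun k hk => by
    rw [update_castLE_of_ne x (Finset.ne_of_mem_erase hk)]

lemma hC_update_of_forall_ne {k : Fin n} (hk : ∀ j, ι j ≠ k) (x : Fin n → ℝ) (t : ℝ) :
    hC n (update x k t) = hC n x :=
  Finset.prod_congr rfl fun j _ => by rw [update_of_ne (hk j)]

lemma pd_hC_of_forall_ne {k : Fin n} (hk : ∀ j, ι j ≠ k) (x : Fin n → ℝ) :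
    pd k (hC n) x = 0 := by
  simp [pd_eq_deriv_update (contDiff_hC.differentiable (by norm_num) x),
    hC_update_of_forall_ne hk]

lemma hasDerivAt_two_add_cos_pi_mul (t : ℝ) :
    HasDerivAt (fun u => 2 + cos (π * u)) (-(π * sin (π * t))) t := by
  simpa [mul_comm] using (((hasDerivAt_id t).const_mul π).cos).const_add 2

lemma hasDerivAt_neg_pi_mul_sin_pi_mul (t : ℝ) :
    HasDerivAt (fun u => -(π * sin (π * u))) (-(π ^ 2 * cos (π * t))) t := by
  simpa [pow_two, mul_comm, mul_assoc] using
    ((((hasDerivAt_id t).const_mul π).sin).const_mul π).fun_neg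

lemma pd_hC_castLE (x : Fin n → ℝ) (j : Fin (n - 1)) :
    pd (ι j) (hC n) x = -(π * sin (π * x (ι j))) *
      ∏ k ∈ Finset.univ.erase j, (2 + cos (π * x (ι k))) := by
  rw [pd_eq_deriv_update (contDiff_hC.differentiable (by norm_num) x)]
  simp only [hC_update_castLE]
  exact ((hasDerivAt_two_add_cos_pi_mul _).mul_const _).deriv

lemma pd_pd_hC_castLE (x : Fin n → ℝ) (j : Fin (n - 1)) :
    pd (ι j) (pd (ι j) (hC n)) x =
      -(π ^ 2 * cos (π * x (ι j))) *
        ∏ k ∈ Finset.univ.erase j, (2 + cos (π * x (ι k))) := by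
  rw [pd_eq_deriv_update (differentiable_pd contDiff_hC _ x)]
  have hsection : ∀ t, pd (ι j) (hC n) (update x (ι j) t)
      = -(π * sin (π * t)) * ∏ k ∈ Finset.univ.erase j, (2 + cos (π * x (ι k))) := by
    intro t
    rw [pd_hC_castLE, update_self]
    congr 1
    exact Finset.prod_congr rfl fun k hk => by
      rw [update_castLE_of_ne x (Finset.ne_of_mem_erase hk)]
  simp only [hsection]
  exact ((hasDerivAt_neg_pi_mul_sin_pi_mul _).mul_const _).deriv

end ConformalFactor

section CriticalSheets

variable {n : ℕ} {N : Fin n}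

lemma castLE_ne_of_val_eq (hN : (N : ℕ) = n - 1) (j : Fin (n - 1)) : ι j ≠ N := by
  rw [Ne, Fin.ext_iff, Fin.val_castLE, hN]; exact j.isLt.ne

lemma sum_erase_eq_sum_castLE {M : Type*} [AddCommMonoid M] (hN : (N : ℕ) = n - 1)
    (f : Fin n → M) :
    ∑ i ∈ Finset.univ.erase N, f i = ∑ j : Fin (n - 1), f (ι j) := by
  have himage : Finset.univ.map (Fin.castLEEmb (Nat.sub_le n 1)) = Finset.univ.erase N := by
    ext i
    simp only [Finset.mem_map, Finset.mem_univ, true_and, Finset.mem_erase, and_true,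
      Fin.castLEEmb_apply]
    constructor
    · rintro ⟨j, rfl⟩
      exact castLE_ne_of_val_eq hN j
    · intro hi
      have : (i : ℕ) ≠ n - 1 := hN ▸ Fin.val_ne_of_ne hi
      exact ⟨⟨i, by omega⟩, rfl⟩
  rw [← himage, Finset.sum_map]
  rfl

lemma pd_hC_eq_zero {x : Fin n → ℝ} (hx : ∀ j, sin (π * x (ι j)) = 0) (k : Fin n) :
    pd k (hC n) x = 0 := by
  by_cases hk : ∃ j, ι j = k
  · obtain ⟨j, rfl⟩ := hk
    rw [pd_hC_castLE, hx j]
    simp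
  · exact pd_hC_of_forall_ne (not_exists.mp hk) x

variable {x : Fin n → ℝ} {v : ℝ} (hx : ∀ j, x (ι j) = v)
include hx

lemma hC_eq_pow : hC n x = (2 + cos (π * v)) ^ (n - 1) := by
  simp [hC, hx]

lemma ricci_normal_hC (hn : 2 ≤ n) (hN : (N : ℕ) = n - 1) (hv : sin (π * v) = 0) :
    ∑ i ∈ Finset.univ.erase N, ((hC n x) ^ 2)⁻¹ * Jac (hC n) N i i x
      = (n - 1) * π ^ 2 * cos (π * v) / (2 + cos (π * v)) := by
  rw [ricci_normal_of_pd_eq_zero contDiff_hC (fun y => (hC_pos y).ne')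
    (pd_hC_of_forall_ne (castLE_ne_of_val_eq hN)) (pd_hC_eq_zero fun j => by rw [hx j, hv]),
    sum_erase_eq_sum_castLE hN]
  simp only [pd_pd_hC_castLE, hx, Finset.prod_const,
    Finset.card_erase_of_mem (Finset.mem_univ _), Finset.sum_const, Finset.card_univ,
    Fintype.card_fin, nsmul_eq_mul, hC_eq_pow hx]
  have hφ : 0 < 2 + cos (π * v) := by linarith [neg_one_le_cos (π * v)]
  obtain ⟨m, rfl⟩ : ∃ m, n = m + 2 := ⟨n - 2, by omega⟩
  simp only [Nat.add_sub_cancel, show m + 2 - 1 = m + 1 by omega, pow_succ]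
  push_cast
  field_simp
  ring

end CriticalSheets

section Geodesics

variable {n : ℕ}

def IsGeodesic (h : (Fin n → ℝ) → ℝ) (γ : ℝ → Fin n → ℝ) : Prop :=
  ∀ (k : Fin n) (t : ℝ), deriv (fun u => deriv (fun v => γ v k) u) t
    + ∑ i, ∑ j, Γconf h k i j (γ t) * deriv (fun v => γ v i) t * deriv (fun v => γ v j) t
      = 0

def HasUnitSpeed (h : (Fin n → ℝ) → ℝ) (γ : ℝ → Fin n → ℝ) : Prop :=
  ∀ t : ℝ, (h (γ t)) ^ 2 * ∑ i, (deriv (fun v => γ v i) t) ^ 2 = 1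

variable {N : Fin n} {ℓ : ℝ → ℝ} {c : ℝ} (hℓ : ∀ t, HasDerivAt ℓ c t) (w : ℝ)
include hℓ

lemma deriv_coord_normalLine (k : Fin n) (t : ℝ) :
    deriv (fun v => if k = N then ℓ v else w) t = if k = N then c else 0 := by
  by_cases hk : k = N <;> simp [hk, (hℓ t).deriv]

lemma isGeodesic_normalLine (hN : (N : ℕ) = n - 1) (hw : sin (π * w) = 0) :
    IsGeodesic (hC n) (fun t j => if j = N then ℓ t else w) := by
  intro k t
  have hcrit : ∀ k, pd k (hC n) (fun j => if j = N then ℓ t else w) = 0 :=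
    pd_hC_eq_zero fun j => by rw [if_neg (castLE_ne_of_val_eq hN j), hw]
  simp [deriv_coord_normalLine hℓ,
    Γconf_eq_zero_of_pd_eq_zero (contDiff_hC.differentiable (by norm_num) _) hcrit]

lemma hasUnitSpeed_normalLine (hN : (N : ℕ) = n - 1)
    (hc : (2 + cos (π * w)) ^ (n - 1) * c = 1) :
    HasUnitSpeed (hC n) (fun t j => if j = N then ℓ t else w) := by
  intro t
  rw [hC_eq_pow fun j => if_neg (castLE_ne_of_val_eq hN j)]
  simp only [deriv_coord_normalLine hℓ, ite_pow, zero_pow two_ne_zero, Finset.sum_ite_eq',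
    Finset.mem_univ, if_true, ← mul_pow, hc, one_pow]

end Geodesics

lemma exists_forall_lt_of_hasDerivWithinAt_Ici_pos {f : ℝ → ℝ} {f' a : ℝ}
    (hf : HasDerivWithinAt f f' (Set.Ici a) a) (hf' : 0 < f') :
    ∃ u > a, ∀ r ∈ Set.Ioo a u, f a < f r := by
  rw [hasDerivWithinAt_iff_tendsto_slope, Set.Ici_sdiff_left] at hf
  obtain ⟨u, hu, hsub⟩ := mem_nhdsGT_iff_exists_Ioo_subset.mp (hf.eventually (lt_mem_nhds hf'))
  refine ⟨u, hu, fun r hr => ?_⟩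
  have hslope : 0 < (f r - f a) / (r - a) := by simpa [slope_def_field] using hsub hr
  exact sub_pos.mp ((div_pos_iff_of_pos_right (sub_pos.mpr hr.1)).mp hslope)

theorem stmt_16 (n : ℕ) (hn : 2 ≤ n) (s : ℝ) :
    let N : Fin n := ⟨n - 1, by omega⟩
    let a : Fin n → ℝ := fun j => if j = N then s else 0
    let b : Fin n → ℝ := fun j => if j = N then s else 1
    let γa : ℝ → Fin n → ℝ := fun t j => if j = N then s + ((3 : ℝ) ^ (n - 1))⁻¹ * t else 0
    let γb : ℝ → Fin n → ℝ := fun t j => if j = N then s + t else 1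
    -- every leaf F_s is totally geodesic: the second fundamental form vanishes
    (∀ x : Fin n → ℝ, x N = s → ∀ i j : Fin n, i ≠ N → j ≠ N →
        (hC n x) ^ 2 * Γconf (hC n) j i N x = 0) ∧
    -- γa, γb are unit-speed geodesics normal to F_s starting at a, b ∈ F_s
    γa 0 = a ∧ γb 0 = b ∧
    (∀ (γ : ℝ → Fin n → ℝ), (γ = γa ∨ γ = γb) →
      (∀ (k : Fin n) (t : ℝ),
        deriv (fun u => deriv (fun v => γ v k) u) t
          + ∑ i, ∑ j, Γconf (hC n) k i j (γ t) *
              deriv (fun v => γ v i) t * deriv (fun v => γ v j) t = 0) ∧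
      (∀ t : ℝ, (hC n (γ t)) ^ 2 * ∑ i, (deriv (fun v => γ v i) t) ^ 2 = 1) ∧
      (∀ k : Fin n, k ≠ N → deriv (fun v => γ v k) 0 = 0)) ∧
    -- the normal Ricci curvatures along γa and γb
    (∀ t : ℝ, ∑ i ∈ Finset.univ.erase N, ((hC n (γa t)) ^ 2)⁻¹ * Jac (hC n) N i i (γa t)
        = ((n : ℝ) - 1) / 3 * π ^ 2) ∧
    (∀ t : ℝ, ∑ i ∈ Finset.univ.erase N, ((hC n (γb t)) ^ 2)⁻¹ * Jac (hC n) N i i (γb t)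
        = (1 - (n : ℝ)) * π ^ 2) ∧
    -- hence the mean curvatures of the parallel hypersurfaces along γa and γb,
    -- which start at 0 and satisfy the Riccati trace equation, differ for small r > 0
    (∀ Ha Hb : ℝ → ℝ, Ha 0 = 0 → Hb 0 = 0 →
      HasDerivWithinAt Ha (((n : ℝ) - 1) / 3 * π ^ 2) (Set.Ici 0) 0 →
      HasDerivWithinAt Hb ((1 - (n : ℝ)) * π ^ 2) (Set.Ici 0) 0 →
      ∃ δ > 0, ∀ r : ℝ, 0 < r → r < δ → Ha r ≠ Hb r) := by
  intro N a b γa γb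
  have hN : (N : ℕ) = n - 1 := rfl
  have hℓa (t : ℝ) :
      HasDerivAt (fun t => s + ((3 : ℝ) ^ (n - 1))⁻¹ * t) ((3 : ℝ) ^ (n - 1))⁻¹ t := by
    simpa using ((hasDerivAt_id' t).const_mul ((3 : ℝ) ^ (n - 1))⁻¹).const_add s
  have hℓb (t : ℝ) : HasDerivAt (fun t => s + t) 1 t := (hasDerivAt_id' t).const_add s
  refine ⟨fun x _ i j hi hj => ?_, by funext j; simp [γa, a], by funext j; simp [γb, b],
    ?_, fun t => ?_, fun t => ?_, ?_⟩
  · rw [Γconf_tangent_normal (contDiff_hC.differentiable (by norm_num) x) (hC_pos x).ne'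
      (pd_hC_of_forall_ne (castLE_ne_of_val_eq hN) x) hi hj, mul_zero]
  · rintro γ (rfl | rfl)
    · exact ⟨isGeodesic_normalLine hℓa 0 hN (by simp),
        hasUnitSpeed_normalLine hℓa 0 hN (by norm_num),
        fun k hk => by rw [deriv_coord_normalLine hℓa, if_neg hk]⟩
    · exact ⟨isGeodesic_normalLine hℓb 1 hN (by simp),
        hasUnitSpeed_normalLine hℓb 1 hN (by norm_num),
        fun k hk => by rw [deriv_coord_normalLine hℓb, if_neg hk]⟩
  · rw [ricci_normal_hC (fun j => if_neg (castLE_ne_of_val_eq hN j)) hn hN (by simp)]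
    norm_num
    ring
  · rw [ricci_normal_hC (fun j => if_neg (castLE_ne_of_val_eq hN j)) hn hN (by simp)]
    norm_num
    ring
  · intro Ha Hb ha0 hb0 hda hdb
    have hgap : 0 < ((n : ℝ) - 1) / 3 * π ^ 2 - (1 - (n : ℝ)) * π ^ 2 := by
      have : (2 : ℝ) ≤ n := by exact_mod_cast hn
      nlinarith [pow_pos pi_pos 2]
    obtain ⟨u, hu, hlt⟩ := exists_forall_lt_of_hasDerivWithinAt_Ici_pos (hda.sub hdb) hgap
    refine ⟨u, hu, fun r hr hru heq => ?_⟩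
    simpa [ha0, hb0, heq] using hlt r ⟨hr, hru⟩
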